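/- Let r > 0 and define F : ℝ² → ℝ by F(t₁,t₂) = (1/2)t₁²t₂ + exp(r·t₂). With κ = 1, the matrix η_{αβ} = ∂³F/∂t₁∂t_α∂t_β is the constant matrix with η₁₂ = η₂₁ = 1 and η₁₁ = η₂₂ = 0, and the function G(t₁,t₂) = −(r/24)t₂ satisfies Getzler's system for F on ℝ². Moreover ∂G/∂t₁ = 0 and E(G) = −1/12 for the Euler vector field E = t₁∂/∂t₁ + (2/r)∂/∂t₂. -/

import Mathlib

/-!
Write `F = ½ t₀² t₁ + f(t₁)` (the indices `0, 1` of `Fin 2` are the paper's `1, 2`). Its third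
derivatives are constant except `∂₁³F = f'''(t₁)`, and its fourth and fifth derivatives are
`f⁗(t₁)`, `f⁽⁵⁾(t₁)` in the direction `∂₁` only. For `G = c t₁` the second derivatives of `G`
vanish, and Getzler's expression collapses to `z₁⁴ (2c f⁗(t₁) + f⁽⁵⁾(t₁)/12)`. For `f = e^{rt}` this
is `z₁⁴ r⁴ e^{rt₁} (2c + r/12)`, which vanishes for `c = -r/24`.
-/

open Real

/-- Partial derivative of a function of `n` real variables in the `i`-th coordinate
direction. -/
noncomputable def pd {n : ℕ} (i : Fin n) (f : (Fin n → ℝ) → ℝ) : (Fin n → ℝ) → ℝ :=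
  fun t => fderiv ℝ f t (Pi.single i 1)

/-- The quantity `Σ_{α₁α₂α₃α₄} z_{α₁}z_{α₂}z_{α₃}z_{α₄} Δ_{α₁α₂α₃α₄}` of Getzler's system,
for a prepotential `F`, a candidate `G`-function `G`, and the (constant) inverse metric
`ηinv`, evaluated at the point `t` and covector `z`. -/
noncomputable def getzlerLHS {n : ℕ} (F G : (Fin n → ℝ) → ℝ)
    (ηinv : Matrix (Fin n) (Fin n) ℝ) (t z : Fin n → ℝ) : ℝ :=
  let c3 : Fin n → Fin n → Fin n → ℝ :=
    fun μ α β => ∑ ν, ηinv μ ν * pd ν (pd α (pd β F)) t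
  let c4 : Fin n → Fin n → Fin n → Fin n → ℝ :=
    fun μ α β γ => ∑ ν, ηinv μ ν * pd ν (pd α (pd β (pd γ F))) t
  let c5 : Fin n → Fin n → Fin n → Fin n → Fin n → ℝ :=
    fun μ α β γ δ => ∑ ν, ηinv μ ν * pd ν (pd α (pd β (pd γ (pd δ F)))) t
  ∑ a1, ∑ a2, ∑ a3, ∑ a4, z a1 * z a2 * z a3 * z a4 *
    (∑ μ, ∑ ν,
      (3 * c3 μ a1 a2 * c3 ν a3 a4 * pd μ (pd ν G) t
        - 4 * c3 μ a1 a2 * c3 ν a3 μ * pd a4 (pd ν G) t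
        - c3 μ a1 a2 * c4 ν a3 a4 μ * pd ν G t
        + 2 * c4 μ a1 a2 a3 * c3 ν a4 μ * pd ν G t
        + (1 / 6) * c4 μ a1 a2 a3 * c4 ν a4 μ ν
        + (1 / 24) * c5 μ a1 a2 a3 a4 * c3 ν μ ν
        - (1 / 4) * c4 μ a1 a2 ν * c4 ν a3 a4 μ))

section PartialDerivatives

variable {n : ℕ} (i : Fin n)

lemma pd_eq_of_hasFDerivAt {f : (Fin n → ℝ) → ℝ} {f' : (Fin n → ℝ) →L[ℝ] ℝ}
    {t : Fin n → ℝ} (h : HasFDerivAt f f' t) : pd i f t = f' (Pi.single i 1) := by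
  rw [pd, h.fderiv]

@[simp]
lemma pd_const (c : ℝ) : pd i (fun _ => c) = fun _ => 0 := by
  funext t
  simp [pd]

@[simp]
lemma pd_coord (j : Fin n) : pd i (fun t => t j) = fun _ => (Pi.single i 1 : Fin n → ℝ) j := by
  funext t
  exact pd_eq_of_hasFDerivAt i (hasFDerivAt_apply j t)

lemma pd_add {f g : (Fin n → ℝ) → ℝ} (hf : Differentiable ℝ f) (hg : Differentiable ℝ g) :
    pd i (fun t => f t + g t) = fun t => pd i f t + pd i g t := by
  funext t
  exact pd_eq_of_hasFDerivAt i ((hf t).hasFDerivAt.add (hg t).hasFDerivAt)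

lemma pd_mul {f g : (Fin n → ℝ) → ℝ} (hf : Differentiable ℝ f) (hg : Differentiable ℝ g) :
    pd i (fun t => f t * g t) = fun t => pd i f t * g t + f t * pd i g t := by
  funext t
  rw [pd_eq_of_hasFDerivAt (f := fun t => f t * g t) i ((hf t).hasFDerivAt.mul (hg t).hasFDerivAt)]
  simp only [pd]
  simp
  ring

lemma pd_const_mul {f : (Fin n → ℝ) → ℝ} (hf : Differentiable ℝ f) (c : ℝ) :
    pd i (fun t => c * f t) = fun t => c * pd i f t := by
  simp [pd_mul i (differentiable_const c) hf]

lemma pd_comp_coord {g : ℝ → ℝ} (hg : Differentiable ℝ g) (j : Fin n) :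
    pd i (fun t => g (t j)) = fun t => (Pi.single i 1 : Fin n → ℝ) j * deriv g (t j) := by
  funext t
  rw [pd_eq_of_hasFDerivAt (f := fun t => g (t j)) i
    ((hg (t j)).hasDerivAt.hasFDerivAt.comp t (hasFDerivAt_apply j t))]
  simp [mul_comm]

lemma pd_iteratedDeriv_comp_coord {g : ℝ → ℝ} (hg : ContDiff ℝ ⊤ g) (k : ℕ) (j : Fin n) :
    pd i (fun t => iteratedDeriv k g (t j)) =
      fun t => (Pi.single i 1 : Fin n → ℝ) j * iteratedDeriv (k + 1) g (t j) := by
  rw [pd_comp_coord i (hg.differentiable_iteratedDeriv k (by simp)), iteratedDeriv_succ]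

end PartialDerivatives

noncomputable def prepotential (f : ℝ → ℝ) : (Fin 2 → ℝ) → ℝ :=
  fun t => (1/2) * (t 0)^2 * t 1 + f (t 1)

lemma prepotential_eq_iteratedDeriv (f : ℝ → ℝ) :
    prepotential f = fun t => (1/2) * (t 0 * t 0) * t 1 + iteratedDeriv 0 f (t 1) := by
  funext t
  simp [prepotential, sq]

section Prepotential

variable {f : ℝ → ℝ} (hf : ContDiff ℝ ⊤ f)
include hf

lemma pd_pd_pd_prepotential (α β γ : Fin 2) :
    pd α (pd β (pd γ (prepotential f))) = fun t =>
      (if (α : ℕ) + β + γ = 1 then 1 else 0) +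
        if α = 1 ∧ β = 1 ∧ γ = 1 then iteratedDeriv 3 f (t 1) else 0 := by
  have hd (k : ℕ) : Differentiable ℝ (iteratedDeriv k f) :=
    hf.differentiable_iteratedDeriv k (by simp)
  rw [prepotential_eq_iteratedDeriv]
  revert α β γ
  simp (disch := fun_prop) only [Fin.forall_fin_two, pd_add, pd_mul, pd_coord, pd_const,
    pd_iteratedDeriv_comp_coord (hg := hf)]
  norm_num

lemma pd_pd_pd_pd_prepotential (α β γ δ : Fin 2) :
    pd α (pd β (pd γ (pd δ (prepotential f)))) = fun t =>
      if α = 1 ∧ β = 1 ∧ γ = 1 ∧ δ = 1 then iteratedDeriv 4 f (t 1) else 0 := by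
  rw [pd_pd_pd_prepotential hf]
  revert α β γ δ
  simp only [Fin.forall_fin_two]
  norm_num [pd_iteratedDeriv_comp_coord (hg := hf)]

lemma pd_pd_pd_pd_pd_prepotential (α β γ δ ε : Fin 2) :
    pd α (pd β (pd γ (pd δ (pd ε (prepotential f))))) = fun t =>
      if α = 1 ∧ β = 1 ∧ γ = 1 ∧ δ = 1 ∧ ε = 1 then iteratedDeriv 5 f (t 1) else 0 := by
  rw [pd_pd_pd_pd_prepotential hf]
  revert α β γ δ ε
  simp only [Fin.forall_fin_two]
  norm_num [pd_iteratedDeriv_comp_coord (hg := hf)]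

lemma pd_zero_pd_pd_prepotential (t : Fin 2 → ℝ) (α β : Fin 2) :
    pd 0 (pd α (pd β (prepotential f))) t = (!![0, 1; 1, 0] : Matrix (Fin 2) (Fin 2) ℝ) α β := by
  rw [pd_pd_pd_prepotential hf]
  revert α β
  simp [Fin.forall_fin_two]

lemma getzlerLHS_prepotential (c : ℝ) (t z : Fin 2 → ℝ) :
    getzlerLHS (prepotential f) (fun t => c * t 1) !![0, 1; 1, 0] t z =
      z 1 ^ 4 * (2 * c * iteratedDeriv 4 f (t 1) + iteratedDeriv 5 f (t 1) / 12) := by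
  simp (disch := fun_prop) only [getzlerLHS, pd_const_mul, pd_coord, pd_const]
  -- rewrite the highest derivatives first, so that the lower-order formulas do not fire inside them
  simp only [pd_pd_pd_pd_pd_prepotential hf]
  simp only [pd_pd_pd_pd_prepotential hf]
  simp only [pd_pd_pd_prepotential hf]
  simp [Fin.sum_univ_two]
  ring

end Prepotential

/-- The `G`-function `G = −(r/24)t₂` of the Frobenius manifold with prepotential
`F = ½t₁²t₂ + e^{rt₂}` (for `r = 1`, the quantum cohomology of `ℂP¹`): the matrix
`η_{αβ} = ∂³F/∂t₁∂t_α∂t_β` is the constant matrix `!![0,1;1,0]`, `G` satisfies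
Getzler's system for `F` on `ℝ²`, `∂G/∂t₁ = 0`, and `E(G) = −1/12` for the Euler
vector field `E = t₁∂₁ + (2/r)∂₂`. -/
theorem G_function_QCP1 (r : ℝ) (hr : 0 < r)
    (F G : (Fin 2 → ℝ) → ℝ)
    (hF : F = fun t => (1/2) * (t 0)^2 * t 1 + Real.exp (r * t 1))
    (hG : G = fun t => -(r/24) * t 1) :
    (∀ t : Fin 2 → ℝ, ∀ α β : Fin 2,
      pd 0 (pd α (pd β F)) t = (!![0, 1; 1, 0] : Matrix (Fin 2) (Fin 2) ℝ) α β) ∧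
    (∀ t z : Fin 2 → ℝ, getzlerLHS F G !![0, 1; 1, 0] t z = 0) ∧
    (∀ t : Fin 2 → ℝ, pd 0 G t = 0) ∧
    (∀ t : Fin 2 → ℝ, t 0 * pd 0 G t + (2/r) * pd 1 G t = -(1/12)) := by
  subst hF hG
  have hexp : ContDiff ℝ ⊤ fun x => exp (r * x) := by fun_prop
  have hdG (i : Fin 2) : pd i (fun t => -(r/24) * t 1) =
      fun _ => -(r/24) * (Pi.single i 1 : Fin 2 → ℝ) 1 := by
    rw [pd_const_mul i (by fun_prop), pd_coord]
  refine ⟨fun t => pd_zero_pd_pd_prepotential hexp t, fun t z => ?_, fun t => ?_, fun t => ?_⟩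
  · refine (getzlerLHS_prepotential hexp _ t z).trans ?_
    rw [iteratedDeriv_exp_const_mul, iteratedDeriv_exp_const_mul]
    ring
  · rw [hdG]
    simp
  · rw [hdG, hdG]
    field_simp
    norm_num
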